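/- Let w : ℝⁿ → Mat_{n×n}(ℝ) be smooth with w(x) skew-symmetric for all x, and let v : ℝⁿ → ℝⁿ be a smooth vector field, such that the Poisson bivector α satisfies the Vaisman-type relation α^{μν}(x) = − Σ_{a,b} α^{μa}(x) α^{νb}(x) w_{ab}(x) + Σ_λ ( v^λ ∂_λ α^{μν} − α^{λν} ∂_λ v^μ − α^{μλ} ∂_λ v^ν )(x) for all x, μ, ν (in invariant terms: α = −♯w + L_v α). Then for every field configuration (X,η) of the Poisson sigma model satisfying both equations of motion (E1) and (E2) on an open set U ⊆ ℝ², one has at every point of U the identity L(X,η) = Σ_{a,b} w_{ab}(X) ∂₁X^a ∂₂X^b + ∂₁( Σ_μ v^μ(X) η_{μ2} ) − ∂₂( Σ_μ v^μ(X) η_{μ1} ); i.e., on-shell the Lagrangian density equals the pullback X*(w) plus an exact term d(i_v η). -/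

import Mathlib

open MeasureTheory

noncomputable def pd (i : Fin 2) (g : ℝ × ℝ → ℝ) (p : ℝ × ℝ) : ℝ :=
  fderiv ℝ g p (if i = 0 then ((1 : ℝ), (0 : ℝ)) else ((0 : ℝ), (1 : ℝ)))

noncomputable def pdn {n : ℕ} (lam : Fin n) (g : (Fin n → ℝ) → ℝ) (x : Fin n → ℝ) : ℝ :=
  fderiv ℝ g x (Pi.single lam 1)

noncomputable def Lag {n : ℕ} (α : (Fin n → ℝ) → Fin n → Fin n → ℝ)
    (X : ℝ × ℝ → Fin n → ℝ) (η : ℝ × ℝ → Fin n → Fin 2 → ℝ) (p : ℝ × ℝ) : ℝ :=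
  (∑ μ, (η p μ 0 * pd 1 (fun q => X q μ) p - η p μ 1 * pd 0 (fun q => X q μ) p))
    + ∑ μ, ∑ ν, α (X p) μ ν * η p μ 0 * η p ν 1

section helpers

lemma pd_sum {ι : Type*} (s : Finset ι) (f : ι → ℝ × ℝ → ℝ) (p : ℝ × ℝ)
    (hf : ∀ j ∈ s, DifferentiableAt ℝ (f j) p) (i : Fin 2) :
    pd i (fun q => ∑ j ∈ s, f j q) p = ∑ j ∈ s, pd i (f j) p := by
  unfold pd
  rw [fderiv_fun_sum hf]
  simp

lemma pd_mul (f g : ℝ × ℝ → ℝ) (p : ℝ × ℝ) (hf : DifferentiableAt ℝ f p)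
    (hg : DifferentiableAt ℝ g p) (i : Fin 2) :
    pd i (fun q => f q * g q) p = pd i f p * g p + f p * pd i g p := by
  unfold pd
  rw [fderiv_fun_mul hf hg]
  simp only [ContinuousLinearMap.add_apply, ContinuousLinearMap.smul_apply, smul_eq_mul]
  ring

lemma fderiv_comp_component {n : ℕ} (X : ℝ × ℝ → Fin n → ℝ) (p : ℝ × ℝ)
    (hX : DifferentiableAt ℝ X p) (lam : Fin n) (e : ℝ × ℝ) :
    fderiv ℝ (fun q => X q lam) p e = fderiv ℝ X p e lam := by
  have h : (fun q => X q lam) = (ContinuousLinearMap.proj (R := ℝ) (φ := fun _ : Fin n => ℝ) lam) ∘ X := rfl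
  rw [h, fderiv_comp p (ContinuousLinearMap.differentiableAt _) hX]
  simp

lemma pd_comp {n : ℕ} (g : (Fin n → ℝ) → ℝ) (X : ℝ × ℝ → Fin n → ℝ) (p : ℝ × ℝ)
    (hg : DifferentiableAt ℝ g (X p)) (hX : DifferentiableAt ℝ X p) (i : Fin 2) :
    pd i (fun q => g (X q)) p = ∑ lam, pdn lam g (X p) * pd i (fun q => X q lam) p := by
  unfold pd pdn
  have h : (fun q => g (X q)) = g ∘ X := rfl
  rw [h, fderiv_comp p hg hX]
  set e := (if i = 0 then ((1 : ℝ), (0 : ℝ)) else ((0 : ℝ), (1 : ℝ))) with he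
  set u := fderiv ℝ X p e with hu
  have hud : u = ∑ lam, u lam • (Pi.single lam (1 : ℝ) : Fin n → ℝ) := by
    funext j
    simp [Finset.sum_apply, Pi.single_apply]
  calc (fderiv ℝ g (X p)).comp (fderiv ℝ X p) e = fderiv ℝ g (X p) u := rfl
    _ = ∑ lam, u lam * fderiv ℝ g (X p) (Pi.single lam 1) := by
        conv_lhs => rw [hud]
        rw [map_sum]
        simp [smul_eq_mul]
    _ = ∑ lam, fderiv ℝ g (X p) (Pi.single lam 1) * fderiv ℝ (fun q => X q lam) p e := by
        refine Finset.sum_congr rfl fun lam _ => ?_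
        rw [fderiv_comp_component X p hX lam e, ← hu, mul_comm]

end helpers
lemma sum3 {n : ℕ} (F : Fin n → Fin n → Fin n → ℝ) :
    ∑ a, ∑ b, ∑ c, F a b c = ∑ b, ∑ c, ∑ a, F a b c := by
  rw [Finset.sum_comm]
  exact Finset.sum_congr rfl fun b _ => Finset.sum_comm

lemma sum4 {n : ℕ} (F : Fin n → Fin n → Fin n → Fin n → ℝ) :
    ∑ a, ∑ b, ∑ c, ∑ d, F a b c d = ∑ c, ∑ d, ∑ a, ∑ b, F a b c d := by
  calc ∑ a, ∑ b, ∑ c, ∑ d, F a b c d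
      = ∑ a, ∑ c, ∑ d, ∑ b, F a b c d :=
        Finset.sum_congr rfl fun a _ => sum3 _
    _ = ∑ c, ∑ d, ∑ a, ∑ b, F a b c d := sum3 _

lemma alg {n : ℕ} (A W dV : Fin n → Fin n → ℝ) (V : Fin n → ℝ)
    (dA : Fin n → Fin n → Fin n → ℝ) (H : Fin n → Fin 2 → ℝ) (D0 D1 : Fin n → ℝ)
    (hAskew : ∀ μ ν, A μ ν = -A ν μ)
    (hrel : ∀ μ ν, A μ ν = -(∑ a, ∑ b, A μ a * A ν b * W a b)
        + ∑ lam, (V lam * dA lam μ ν - A lam ν * dV lam μ - A μ lam * dV lam ν))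
    (he2 : ∀ ρ, D0 ρ = D1 ρ - ∑ μ, ∑ ν, dA ρ μ ν * H μ 0 * H ν 1) :
    (∑ μ, (H μ 0 * (-∑ ν, A μ ν * H ν 1) - H μ 1 * (-∑ ν, A μ ν * H ν 0)))
      + ∑ μ, ∑ ν, A μ ν * H μ 0 * H ν 1
    = (∑ a, ∑ b, W a b * (-∑ ν, A a ν * H ν 0) * (-∑ ν, A b ν * H ν 1))
      + ∑ μ, ((∑ lam, dV lam μ * (-∑ ν, A lam ν * H ν 0)) * H μ 1 + V μ * D0 μ)
      - ∑ μ, ((∑ lam, dV lam μ * (-∑ ν, A lam ν * H ν 1)) * H μ 0 + V μ * D1 μ) := by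
  -- LHS = -A2
  have hLHS : (∑ μ, (H μ 0 * (-∑ ν, A μ ν * H ν 1) - H μ 1 * (-∑ ν, A μ ν * H ν 0)))
      + ∑ μ, ∑ ν, A μ ν * H μ 0 * H ν 1
      = -(∑ μ, ∑ ν, A μ ν * H μ 0 * H ν 1) := by
    have h1 : (∑ μ, (H μ 0 * (-∑ ν, A μ ν * H ν 1) - H μ 1 * (-∑ ν, A μ ν * H ν 0)))
        = (-∑ μ, ∑ ν, A μ ν * H μ 0 * H ν 1) + ∑ μ, ∑ ν, A μ ν * H μ 1 * H ν 0 := by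
      rw [← Finset.sum_neg_distrib, ← Finset.sum_add_distrib]
      refine Finset.sum_congr rfl fun μ _ => ?_
      have ea : ∑ ν, H μ 0 * (A μ ν * H ν 1) = ∑ ν, A μ ν * H μ 0 * H ν 1 :=
        Finset.sum_congr rfl fun ν _ => by ring
      have eb : ∑ ν, H μ 1 * (A μ ν * H ν 0) = ∑ ν, A μ ν * H μ 1 * H ν 0 :=
        Finset.sum_congr rfl fun ν _ => by ring
      rw [mul_neg, mul_neg, Finset.mul_sum, Finset.mul_sum, ea, eb]
      ring
    have h2 : (∑ μ, ∑ ν, A μ ν * H μ 1 * H ν 0) = -(∑ μ, ∑ ν, A μ ν * H μ 0 * H ν 1) := by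
      rw [Finset.sum_comm, ← Finset.sum_neg_distrib]
      refine Finset.sum_congr rfl fun x _ => ?_
      rw [← Finset.sum_neg_distrib]
      exact Finset.sum_congr rfl fun y _ => by rw [hAskew y x]; ring
    rw [h1, h2]; ring
  rw [hLHS]
  -- split the D0 sum using he2
  have split2 : ∑ μ, ((∑ lam, dV lam μ * (-∑ ν, A lam ν * H ν 0)) * H μ 1 + V μ * D0 μ)
      = (∑ μ, (∑ lam, dV lam μ * (-∑ ν, A lam ν * H ν 0)) * H μ 1)
        + (∑ μ, V μ * D1 μ)
        - ∑ μ, V μ * (∑ a, ∑ b, dA μ a b * H a 0 * H b 1) := by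
    rw [Finset.sum_add_distrib]
    have : ∑ μ, V μ * D0 μ = (∑ μ, V μ * D1 μ)
        - ∑ μ, V μ * (∑ a, ∑ b, dA μ a b * H a 0 * H b 1) := by
      rw [← Finset.sum_sub_distrib]
      exact Finset.sum_congr rfl fun μ _ => by rw [he2 μ]; ring
    rw [this]; ring
  have split3 : ∑ μ, ((∑ lam, dV lam μ * (-∑ ν, A lam ν * H ν 1)) * H μ 0 + V μ * D1 μ)
      = (∑ μ, (∑ lam, dV lam μ * (-∑ ν, A lam ν * H ν 1)) * H μ 0)
        + ∑ μ, V μ * D1 μ := Finset.sum_add_distrib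
  rw [split2, split3]
  -- chunk R1
  have hR1 : (∑ a, ∑ b, W a b * (-∑ ν, A a ν * H ν 0) * (-∑ ν, A b ν * H ν 1))
      = ∑ μ, ∑ ν, (∑ a, ∑ b, A μ a * A ν b * W a b) * H μ 0 * H ν 1 := by
    calc (∑ a, ∑ b, W a b * (-∑ ν, A a ν * H ν 0) * (-∑ ν, A b ν * H ν 1))
        = ∑ a, ∑ b, ∑ μ, ∑ ν, (A a μ * A b ν * W a b) * H μ 0 * H ν 1 := by
          refine Finset.sum_congr rfl fun a _ => Finset.sum_congr rfl fun b _ => ?_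
          have : W a b * (-∑ ν, A a ν * H ν 0) * (-∑ ν, A b ν * H ν 1)
              = W a b * ((∑ μ, A a μ * H μ 0) * (∑ ν, A b ν * H ν 1)) := by ring
          rw [this, Fintype.sum_mul_sum, Finset.mul_sum]
          refine Finset.sum_congr rfl fun μ _ => ?_
          rw [Finset.mul_sum]
          exact Finset.sum_congr rfl fun ν _ => by ring
      _ = ∑ μ, ∑ ν, ∑ a, ∑ b, (A a μ * A b ν * W a b) * H μ 0 * H ν 1 := sum4 _
      _ = ∑ μ, ∑ ν, (∑ a, ∑ b, A μ a * A ν b * W a b) * H μ 0 * H ν 1 := by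
          refine Finset.sum_congr rfl fun μ _ => Finset.sum_congr rfl fun ν _ => ?_
          rw [Finset.sum_mul, Finset.sum_mul]
          refine Finset.sum_congr rfl fun a _ => ?_
          rw [Finset.sum_mul, Finset.sum_mul]
          refine Finset.sum_congr rfl fun b _ => ?_
          rw [hAskew a μ, hAskew b ν]; ring
  -- chunk S2a
  have hS2a : (∑ μ, (∑ lam, dV lam μ * (-∑ ν, A lam ν * H ν 0)) * H μ 1)
      = ∑ μ, ∑ ν, (∑ lam, A μ lam * dV lam ν) * H μ 0 * H ν 1 := by
    calc (∑ μ, (∑ lam, dV lam μ * (-∑ ν, A lam ν * H ν 0)) * H μ 1)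
        = ∑ μ, ∑ lam, ∑ ν, -(dV lam μ * A lam ν * H ν 0 * H μ 1) := by
          refine Finset.sum_congr rfl fun μ _ => ?_
          rw [Finset.sum_mul]
          refine Finset.sum_congr rfl fun lam _ => ?_
          rw [Finset.sum_neg_distrib, mul_neg, neg_mul, Finset.mul_sum, Finset.sum_mul]
          exact congrArg Neg.neg (Finset.sum_congr rfl fun ν _ => by ring)
      _ = ∑ lam, ∑ ν, ∑ μ, -(dV lam μ * A lam ν * H ν 0 * H μ 1) := sum3 _
      _ = ∑ ν, ∑ μ, ∑ lam, -(dV lam μ * A lam ν * H ν 0 * H μ 1) := sum3 _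
      _ = ∑ μ, ∑ ν, (∑ lam, A μ lam * dV lam ν) * H μ 0 * H ν 1 := by
          refine Finset.sum_congr rfl fun x _ => Finset.sum_congr rfl fun y _ => ?_
          rw [Finset.sum_mul, Finset.sum_mul]
          refine Finset.sum_congr rfl fun lam _ => ?_
          rw [hAskew x lam]; ring
  -- chunk S3a
  have hS3a : (∑ μ, (∑ lam, dV lam μ * (-∑ ν, A lam ν * H ν 1)) * H μ 0)
      = ∑ μ, ∑ ν, (-(∑ lam, A lam ν * dV lam μ)) * H μ 0 * H ν 1 := by
    calc (∑ μ, (∑ lam, dV lam μ * (-∑ ν, A lam ν * H ν 1)) * H μ 0)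
        = ∑ μ, ∑ lam, ∑ ν, -(dV lam μ * A lam ν * H ν 1 * H μ 0) := by
          refine Finset.sum_congr rfl fun μ _ => ?_
          rw [Finset.sum_mul]
          refine Finset.sum_congr rfl fun lam _ => ?_
          rw [Finset.sum_neg_distrib, mul_neg, neg_mul, Finset.mul_sum, Finset.sum_mul]
          exact congrArg Neg.neg (Finset.sum_congr rfl fun ν _ => by ring)
      _ = ∑ μ, ∑ ν, ∑ lam, -(dV lam μ * A lam ν * H ν 1 * H μ 0) :=
          Finset.sum_congr rfl fun μ _ => Finset.sum_comm
      _ = ∑ μ, ∑ ν, (-(∑ lam, A lam ν * dV lam μ)) * H μ 0 * H ν 1 := by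
          refine Finset.sum_congr rfl fun μ _ => Finset.sum_congr rfl fun ν _ => ?_
          rw [neg_mul, neg_mul, Finset.sum_mul, Finset.sum_mul, ← Finset.sum_neg_distrib]
          exact Finset.sum_congr rfl fun lam _ => by ring
  -- chunk SdA
  have hSdA : (∑ μ, V μ * (∑ a, ∑ b, dA μ a b * H a 0 * H b 1))
      = ∑ μ, ∑ ν, (∑ lam, V lam * dA lam μ ν) * H μ 0 * H ν 1 := by
    calc (∑ μ, V μ * (∑ a, ∑ b, dA μ a b * H a 0 * H b 1))
        = ∑ lam, ∑ a, ∑ b, V lam * dA lam a b * H a 0 * H b 1 := by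
          refine Finset.sum_congr rfl fun lam _ => ?_
          rw [Finset.mul_sum]
          refine Finset.sum_congr rfl fun a _ => ?_
          rw [Finset.mul_sum]
          exact Finset.sum_congr rfl fun b _ => by ring
      _ = ∑ a, ∑ b, ∑ lam, V lam * dA lam a b * H a 0 * H b 1 := sum3 _
      _ = ∑ μ, ∑ ν, (∑ lam, V lam * dA lam μ ν) * H μ 0 * H ν 1 := by
          refine Finset.sum_congr rfl fun μ _ => Finset.sum_congr rfl fun ν _ => ?_
          rw [Finset.sum_mul, Finset.sum_mul]
  rw [hR1, hS2a, hS3a, hSdA]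
  -- combine everything into a single double sum and use hrel
  have comb : ∀ (f g h k : Fin n → Fin n → ℝ),
      ((∑ μ, ∑ ν, f μ ν) + (∑ μ, ∑ ν, g μ ν) + (∑ μ, ∑ ν, h μ ν) - (∑ μ, ∑ ν, k μ ν))
        = ∑ μ, ∑ ν, (f μ ν + g μ ν + h μ ν - k μ ν) := by
    intro f g h k
    rw [← Finset.sum_add_distrib, ← Finset.sum_add_distrib, ← Finset.sum_sub_distrib]
    refine Finset.sum_congr rfl fun μ _ => ?_
    rw [← Finset.sum_add_distrib, ← Finset.sum_add_distrib, ← Finset.sum_sub_distrib]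
  have goal2 : (∑ μ, ∑ ν, (∑ a, ∑ b, A μ a * A ν b * W a b) * H μ 0 * H ν 1)
      + ((∑ μ, ∑ ν, (∑ lam, A μ lam * dV lam ν) * H μ 0 * H ν 1)
          + (∑ μ, V μ * D1 μ)
          - ∑ μ, ∑ ν, (∑ lam, V lam * dA lam μ ν) * H μ 0 * H ν 1)
      - ((∑ μ, ∑ ν, (-(∑ lam, A lam ν * dV lam μ)) * H μ 0 * H ν 1)
          + ∑ μ, V μ * D1 μ)
      = -(∑ μ, ∑ ν, A μ ν * H μ 0 * H ν 1) := by
    have e : (∑ μ, ∑ ν, (∑ a, ∑ b, A μ a * A ν b * W a b) * H μ 0 * H ν 1)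
        + ((∑ μ, ∑ ν, (∑ lam, A μ lam * dV lam ν) * H μ 0 * H ν 1)
            + (∑ μ, V μ * D1 μ)
            - ∑ μ, ∑ ν, (∑ lam, V lam * dA lam μ ν) * H μ 0 * H ν 1)
        - ((∑ μ, ∑ ν, (-(∑ lam, A lam ν * dV lam μ)) * H μ 0 * H ν 1)
            + ∑ μ, V μ * D1 μ)
        = (∑ μ, ∑ ν, (∑ a, ∑ b, A μ a * A ν b * W a b) * H μ 0 * H ν 1)
          + (∑ μ, ∑ ν, (∑ lam, A μ lam * dV lam ν) * H μ 0 * H ν 1)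
          + (∑ μ, ∑ ν, (∑ lam, A lam ν * dV lam μ) * H μ 0 * H ν 1)
          - ∑ μ, ∑ ν, (∑ lam, V lam * dA lam μ ν) * H μ 0 * H ν 1 := by
      have neg3 : (∑ μ, ∑ ν, (-(∑ lam, A lam ν * dV lam μ)) * H μ 0 * H ν 1)
          = -(∑ μ, ∑ ν, (∑ lam, A lam ν * dV lam μ) * H μ 0 * H ν 1) := by
        rw [← Finset.sum_neg_distrib]
        refine Finset.sum_congr rfl fun μ _ => ?_
        rw [← Finset.sum_neg_distrib]
        exact Finset.sum_congr rfl fun ν _ => by ring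
      rw [neg3]; ring
    rw [e, comb, ← Finset.sum_neg_distrib]
    refine Finset.sum_congr rfl fun μ _ => ?_
    rw [← Finset.sum_neg_distrib]
    refine Finset.sum_congr rfl fun ν _ => ?_
    have hsplit : (∑ lam, (V lam * dA lam μ ν - A lam ν * dV lam μ - A μ lam * dV lam ν))
        = (∑ lam, V lam * dA lam μ ν) - (∑ lam, A lam ν * dV lam μ)
          - ∑ lam, A μ lam * dV lam ν := by
      rw [Finset.sum_sub_distrib, Finset.sum_sub_distrib]
    have hc : A μ ν = -(∑ a, ∑ b, A μ a * A ν b * W a b)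
        + ((∑ lam, V lam * dA lam μ ν) - (∑ lam, A lam ν * dV lam μ)
            - ∑ lam, A μ lam * dV lam ν) := by
      rw [hrel μ ν, hsplit]
    linear_combination (H μ 0 * H ν 1) * hc
  exact goal2.symm

/-- Vaisman's condition. If `α = −♯w + L_v α` in coordinates, i.e.
`α^{μν} = −∑ α^{μa} α^{νb} w_{ab} + ∑_λ (v^λ ∂_λ α^{μν} − α^{λν} ∂_λ v^μ − α^{μλ} ∂_λ v^ν)`,
then on every solution `(X,η)` of the Poisson sigma model the Lagrangian density equals
the pullback `X*(w)` plus the exact term `d(i_v η)`. -/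
theorem stmt6 {n : ℕ} (hn : 1 ≤ n)
    (α : (Fin n → ℝ) → Fin n → Fin n → ℝ) (hα : ContDiff ℝ (⊤ : ℕ∞) α)
    (hskew : ∀ x μ ν, α x μ ν = - α x ν μ)
    (w : (Fin n → ℝ) → Fin n → Fin n → ℝ) (hw : ContDiff ℝ (⊤ : ℕ∞) w)
    (hwskew : ∀ x a b, w x a b = - w x b a)
    (v : (Fin n → ℝ) → Fin n → ℝ) (hv : ContDiff ℝ (⊤ : ℕ∞) v)
    (hrel : ∀ x μ ν, α x μ ν
      = -(∑ a, ∑ b, α x μ a * α x ν b * w x a b)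
        + ∑ lam, (v x lam * pdn lam (fun y => α y μ ν) x
            - α x lam ν * pdn lam (fun y => v y μ) x
            - α x μ lam * pdn lam (fun y => v y ν) x))
    (U : Set (ℝ × ℝ)) (hU : IsOpen U)
    (X : ℝ × ℝ → Fin n → ℝ) (η : ℝ × ℝ → Fin n → Fin 2 → ℝ)
    (hX : ContDiffOn ℝ (⊤ : ℕ∞) X U) (hη : ContDiffOn ℝ (⊤ : ℕ∞) η U)
    (hE1 : ∀ p ∈ U, ∀ i : Fin 2, ∀ μ,
      pd i (fun q => X q μ) p + ∑ ν, α (X p) μ ν * η p ν i = 0)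
    (hE2 : ∀ p ∈ U, ∀ ρ,
      pd 0 (fun q => η q ρ 1) p - pd 1 (fun q => η q ρ 0) p
        + ∑ μ, ∑ ν, pdn ρ (fun x => α x μ ν) (X p) * η p μ 0 * η p ν 1 = 0)
    (p : ℝ × ℝ) (hp : p ∈ U) :
    Lag α X η p
      = (∑ a, ∑ b, w (X p) a b * pd 0 (fun q => X q a) p * pd 1 (fun q => X q b) p)
        + pd 0 (fun q => ∑ μ, v (X q) μ * η q μ 1) p
        - pd 1 (fun q => ∑ μ, v (X q) μ * η q μ 0) p := by
  have hmem : U ∈ nhds p := hU.mem_nhds hp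
  have hXd : DifferentiableAt ℝ X p := (hX.contDiffAt hmem).differentiableAt (by norm_num)
  have hηd : DifferentiableAt ℝ η p := (hη.contDiffAt hmem).differentiableAt (by norm_num)
  have hηc : ∀ μ (j : Fin 2), DifferentiableAt ℝ (fun q => η q μ j) p := by
    intro μ j
    have h1 : DifferentiableAt ℝ (fun q => η q μ) p :=
      ((ContinuousLinearMap.proj (R := ℝ) (φ := fun _ : Fin n => Fin 2 → ℝ) μ).differentiableAt).comp p hηd
    exact ((ContinuousLinearMap.proj (R := ℝ) (φ := fun _ : Fin 2 => ℝ) j).differentiableAt).comp p h1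
  have hvc : ∀ μ, DifferentiableAt ℝ (fun y => v y μ) (X p) := by
    intro μ
    exact ((ContinuousLinearMap.proj (R := ℝ) (φ := fun _ : Fin n => ℝ) μ).differentiableAt).comp
      (X p) ((hv.differentiable (by norm_num)) (X p))
  have e1 : ∀ (i : Fin 2) μ, pd i (fun q => X q μ) p = -∑ ν, α (X p) μ ν * η p ν i := by
    intro i μ
    have := hE1 p hp i μ
    linarith
  have e2 : ∀ ρ, pd 0 (fun q => η q ρ 1) p
      = pd 1 (fun q => η q ρ 0) p
        - ∑ μ, ∑ ν, pdn ρ (fun x => α x μ ν) (X p) * η p μ 0 * η p ν 1 := by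
    intro ρ
    have := hE2 p hp ρ
    linarith
  have hP : ∀ i j : Fin 2, pd i (fun q => ∑ μ, v (X q) μ * η q μ j) p
      = ∑ μ, ((∑ lam, pdn lam (fun y => v y μ) (X p) * pd i (fun q => X q lam) p) * η p μ j
          + v (X p) μ * pd i (fun q => η q μ j) p) := by
    intro i j
    rw [pd_sum Finset.univ (fun μ q => v (X q) μ * η q μ j) p
      (fun μ _ => ((hvc μ).comp p hXd).mul (hηc μ j)) i]
    refine Finset.sum_congr rfl fun μ _ => ?_
    rw [pd_mul (fun q => v (X q) μ) (fun q => η q μ j) p ((hvc μ).comp p hXd) (hηc μ j) i,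
      pd_comp (fun y => v y μ) X p (hvc μ) hXd i]
  rw [Lag, hP 0 1, hP 1 0]
  simp only [e1]
  exact alg (α (X p)) (w (X p)) (fun lam μ => pdn lam (fun y => v y μ) (X p)) (v (X p))
    (fun lam μ ν => pdn lam (fun y => α y μ ν) (X p)) (η p)
    (fun μ => pd 0 (fun q => η q μ 1) p) (fun μ => pd 1 (fun q => η q μ 0) p)
    (fun μ ν => hskew (X p) μ ν) (fun μ ν => hrel (X p) μ ν) e2
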